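/- Let q ≥ 2 and let K be a real q × q matrix (with rows and columns indexed by 0, …, q−1). Suppose that for every sequence z : ℤ → ℝ, every i ∈ ℤ, and every j ∈ {1, …, q−1}, the overlapping-window consistency relation ∑_{k=0}^{q−1} K_{j,k} · z_{i+k} = ∑_{k=0}^{q−1} K_{j−1,k} · z_{i+1+k} holds (i.e., component j of K applied to the window (z_i, …, z_{i+q−1}) agrees with component j−1 of K applied to the shifted window (z_{i+1}, …, z_{i+q})). Then K is a scalar multiple of the identity matrix; in particular, K_{i,j} = 0 whenever i ≠ j, so the prediction of any component z_i cannot depend on any other component z_j. -/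

import Mathlib

/-!
Feed the consistency relation the unit impulse at position `m`: each side then picks out a
single matrix entry, so the rows of `K`, padded by zero to functions on `ℤ`, are shifts of one
another, `row (j + 1) (n + 1) = row j n`. Shifting an entry down the diagonal until it leaves
the band `0 ≤ n < q` of some row shows that every off-diagonal entry vanishes, and shifting it
to the top-left corner shows that every diagonal entry equals `K 0 0`.
-/

open Function

section PaddedShift

variable {M : Type*} {q : ℕ} {f : ℕ → ℤ → M}

lemma apply_add_eq_of_shift (hshift : ∀ j n, j + 1 < q → f (j + 1) (n + 1) = f j n)
    (j d : ℕ) (hjd : j + d < q) (n : ℤ) : f (j + d) (n + d) = f j n := by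
  induction d generalizing n with
  | zero => simp
  | succ d ih =>
    calc f (j + (d + 1)) (n + ↑(d + 1)) = f (j + d + 1) (n + d + 1) := by
          rw [← add_assoc]; push_cast; ring_nf
      _ = f j n := by rw [hshift _ _ (by omega), ih (by omega) n]

lemma apply_eq_ite_of_shift [Zero M] (hshift : ∀ j n, j + 1 < q → f (j + 1) (n + 1) = f j n)
    (hsupp : ∀ (j : ℕ) (n : ℤ), j < q → (n < 0 ∨ q ≤ n) → f j n = 0)
    {j : ℕ} (hj : j < q) (n : ℤ) :
    f j n = if n = j then f 0 0 else 0 := by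
  have hrow : f j n = f 0 (n - j) := by
    simpa using apply_add_eq_of_shift hshift 0 j (by omega) (n - j)
  split_ifs with hn
  · rw [hrow, hn, sub_self]
  rcases lt_or_gt_of_ne hn with hlt | hgt
  · exact hrow.trans (hsupp 0 _ (by omega) (Or.inl (by omega)))
  · -- push the entry to row `q - 1`, where it lies beyond the last column
    have hlast := apply_add_eq_of_shift hshift 0 (q - 1) (by omega) (n - j)
    rw [zero_add] at hlast
    rw [hrow, ← hlast, hsupp (q - 1) _ (by omega) (Or.inr (by omega))]

end PaddedShift

lemma sum_mul_single_eq_extend {R ι : Type*} [Semiring R] [Fintype ι] {e : ι → ℤ}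
    (he : Injective e) (f : ι → R) (i m : ℤ) :
    ∑ k, f k * (Pi.single m 1 : ℤ → R) (i + e k) = extend e f 0 (m - i) := by
  by_cases h : ∃ k, e k = m - i
  · obtain ⟨k₀, hk₀⟩ := h
    rw [← hk₀, he.extend_apply, Finset.sum_eq_single k₀]
    · rw [show i + e k₀ = m by omega, Pi.single_eq_same, mul_one]
    · intro k _ hk
      rw [Pi.single_eq_of_ne (fun hkm => hk (he (by omega))), mul_zero]
    · simp
  · rw [extend_apply' _ _ _ h]
    refine Finset.sum_eq_zero fun k _ => ?_
    rw [Pi.single_eq_of_ne (fun hkm => h ⟨k, by omega⟩), mul_zero]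

section PaddedRow

variable {R : Type*} {q : ℕ}

/-- Row `j` of `K`, extended by zero to all columns `n : ℤ`; rows `j ≥ q` are zero. -/
noncomputable def paddedRow [Zero R] (K : Matrix (Fin q) (Fin q) R) (j : ℕ) : ℤ → R :=
  if h : j < q then extend (fun k : Fin q => (k : ℤ)) (K ⟨j, h⟩) 0 else 0

lemma Fin.intCast_val_injective : Injective (fun k : Fin q => (k : ℤ)) :=
  Nat.cast_injective.comp Fin.val_injective

lemma paddedRow_coe [Zero R] (K : Matrix (Fin q) (Fin q) R) (i k : Fin q) :
    paddedRow K i k = K i k := by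
  simp [paddedRow, Fin.intCast_val_injective.extend_apply]

lemma paddedRow_eq_zero [Zero R] (K : Matrix (Fin q) (Fin q) R) (j : ℕ) {n : ℤ}
    (hn : n < 0 ∨ q ≤ n) : paddedRow K j n = 0 := by
  unfold paddedRow
  split_ifs
  · exact extend_apply' _ _ _ fun ⟨k, hk⟩ => by have := k.isLt; omega
  · rfl

lemma paddedRow_shift [Semiring R] (K : Matrix (Fin q) (Fin q) R)
    (hcons : ∀ (z : ℤ → R) (i : ℤ) (j : ℕ) (_ : 1 ≤ j) (hjq : j < q),
      (∑ k : Fin q, K ⟨j, hjq⟩ k * z (i + (k : ℤ))) =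
        ∑ k : Fin q, K ⟨j - 1, (j.sub_le 1).trans_lt hjq⟩ k * z (i + 1 + (k : ℤ)))
    (j : ℕ) (n : ℤ) (hj : j + 1 < q) :
    paddedRow K (j + 1) (n + 1) = paddedRow K j n := by
  have h := hcons (Pi.single (n + 1) 1) 0 (j + 1) (by omega) hj
  simp only [Nat.add_sub_cancel] at h
  rw [sum_mul_single_eq_extend Fin.intCast_val_injective,
    sum_mul_single_eq_extend Fin.intCast_val_injective] at h
  simpa [paddedRow, hj, show j < q by omega] using h

end PaddedRow

/-- If the same `q × q` matrix `K` (with `q ≥ 2`) is an exact one-step predictor for all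
overlapping length-`q` windows of every sequence `z : ℤ → ℝ` — i.e. component `j` of `K`
applied to the window starting at `i` agrees with component `j−1` of `K` applied to the
window starting at `i+1` — then `K` is a scalar multiple of the identity matrix; in
particular all off-diagonal entries vanish. -/
theorem overlapping_window_consistency_forces_diagonal
    (q : ℕ) (K : Matrix (Fin q) (Fin q) ℝ)
    (hcons : ∀ (z : ℤ → ℝ) (i : ℤ) (j : ℕ) (hj1 : 1 ≤ j) (hjq : j < q),
      (∑ k : Fin q, K ⟨j, hjq⟩ k * z (i + (k : ℤ))) =
        ∑ k : Fin q, K ⟨j - 1, by omega⟩ k * z (i + 1 + (k : ℤ))) :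
    (∃ c : ℝ, K = c • (1 : Matrix (Fin q) (Fin q) ℝ)) ∧
      ∀ i j : Fin q, i ≠ j → K i j = 0 := by
  have hK : K = paddedRow K 0 0 • (1 : Matrix (Fin q) (Fin q) ℝ) := by
    ext i k
    rw [← paddedRow_coe K i k, apply_eq_ite_of_shift (paddedRow_shift K hcons)
      (fun j _ _ => paddedRow_eq_zero K j) i.isLt]
    simp [Matrix.one_apply, eq_comm, Fin.ext_iff]
  refine ⟨⟨_, hK⟩, fun i j hij => ?_⟩
  rw [hK, Matrix.smul_apply, Matrix.one_apply_ne hij, smul_zero]
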